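/- arXiv:1303.3679 — 5 statements merged into one kernel-verified Lean document; each statement's English description precedes it below -/
import Mathlib

section
/- Let B be the weighted Büchi automaton constructed from non-blocking generalized Büchi automata G_1, …, G_n with rewards rew_1 ≥ … ≥ rew_n. Let I ⊆ {1,…,n} and let w be an infinite word over Σ such that w ∈ L(G_i) for every i ∈ I and w ∉ L(G_i) for every i ∉ I. Then there exists an accepting run ρ of B over w with reward C(ρ) = Σ_{i∈I} rew_i. -/
/-! Common definitions: labeled transition systems, Büchi automata,
generalized Büchi automata, products, weighted runs, fragments, rewards. -/

/-- A labeled transition system `T = (S, s_init, R, L)`. -/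
structure LTS (S : Type*) (A : Type*) where
  init : S
  trans : Set (S × S)
  label : S → A

namespace LTS

/-- An (infinite) trace of a transition system. -/
def IsTrace {S A : Type*} (T : LTS S A) (τ : ℕ → S) : Prop :=
  τ 0 = T.init ∧ ∀ i, (τ i, τ (i + 1)) ∈ T.trans

/-- The word produced by a trace. -/
def word {S A : Type*} (T : LTS S A) (τ : ℕ → S) : ℕ → A :=
  fun i => T.label (τ i)

end LTS

/-- A Büchi automaton `(Q, q_init, Σ, δ, F)`. -/
structure BA (Q : Type*) (A : Type*) where
  init : Q
  trans : Set (Q × A × Q)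
  acc : Set Q

namespace BA

/-- A run of a Büchi automaton over an infinite word. -/
def IsRun {Q A : Type*} (M : BA Q A) (w : ℕ → A) (ρ : ℕ → Q) : Prop :=
  ρ 0 = M.init ∧ ∀ i, (ρ i, w i, ρ (i + 1)) ∈ M.trans

/-- A run is accepting if it visits the accepting set infinitely often. -/
def IsAccepting {Q A : Type*} (M : BA Q A) (ρ : ℕ → Q) : Prop :=
  ∀ N, ∃ i, N ≤ i ∧ ρ i ∈ M.acc

/-- The language of a Büchi automaton. -/
def Lang {Q A : Type*} (M : BA Q A) : Set (ℕ → A) :=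
  {w | ∃ ρ, M.IsRun w ρ ∧ M.IsAccepting ρ}

/-- A Büchi automaton is non-blocking if every state has a successor on every letter. -/
def NonBlocking {Q A : Type*} (M : BA Q A) : Prop :=
  ∀ q σ, ∃ q', (q, σ, q') ∈ M.trans

end BA

/-- A generalized Büchi automaton with `m` acceptance sets `F_1, …, F_m`
(0-indexed as `acc 0, …, acc (m-1)`). -/
structure GBA (Q : Type*) (A : Type*) (m : ℕ) where
  init : Q
  trans : Set (Q × A × Q)
  acc : Fin m → Set Q

namespace GBA

/-- A run of a generalized Büchi automaton over an infinite word. -/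
def IsRun {Q A : Type*} {m : ℕ} (M : GBA Q A m) (w : ℕ → A) (ρ : ℕ → Q) : Prop :=
  ρ 0 = M.init ∧ ∀ i, (ρ i, w i, ρ (i + 1)) ∈ M.trans

/-- A run is accepting if it visits each acceptance set infinitely often. -/
def IsAccepting {Q A : Type*} {m : ℕ} (M : GBA Q A m) (ρ : ℕ → Q) : Prop :=
  ∀ l : Fin m, ∀ N, ∃ i, N ≤ i ∧ ρ i ∈ M.acc l

/-- The language of a generalized Büchi automaton. -/
def Lang {Q A : Type*} {m : ℕ} (M : GBA Q A m) : Set (ℕ → A) :=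
  {w | ∃ ρ, M.IsRun w ρ ∧ M.IsAccepting ρ}

/-- A GBA is non-blocking if every state has a successor on every letter. -/
def NonBlocking {Q A : Type*} {m : ℕ} (M : GBA Q A m) : Prop :=
  ∀ q σ, ∃ q', (q, σ, q') ∈ M.trans

end GBA

/-- Transitions of the product automaton `P = T ⊗ B`. -/
def ProdTrans {S A Q : Type*} (T : LTS S A) (M : BA Q A) : Set ((S × Q) × (S × Q)) :=
  {t | (t.1.1, t.2.1) ∈ T.trans ∧ (t.1.2, T.label t.1.1, t.2.2) ∈ M.trans}

/-- Accepting states `F_P = S × F` of the product automaton. -/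
def ProdAcc {S A Q : Type*} (_T : LTS S A) (M : BA Q A) : Set (S × Q) :=
  {p | p.2 ∈ M.acc}

/-- A run of the product automaton `P = T ⊗ B`. -/
def IsProdRun {S A Q : Type*} (T : LTS S A) (M : BA Q A) (ρ : ℕ → S × Q) : Prop :=
  ρ 0 = (T.init, M.init) ∧ ∀ i, (ρ i, ρ (i + 1)) ∈ ProdTrans T M

/-- An accepting run of the product automaton (visits `F_P` infinitely often). -/
def IsProdAccepting {S A Q : Type*} (T : LTS S A) (M : BA Q A) (ρ : ℕ → S × Q) : Prop :=
  ∀ N, ∃ i, N ≤ i ∧ ρ i ∈ ProdAcc T M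

/-- The weight of the `j`-th step of a sequence of product states, where `W` is the
weight function of the underlying weighted Büchi automaton:
`W_P(((s,q),(s',q'))) = W((q, L(s), q'))`. -/
def ProdStepW {S A Q : Type*} (T : LTS S A) (W : Q → A → Q → ℕ) (ρ : ℕ → S × Q)
    (j : ℕ) : ℕ :=
  W (ρ j).2 (T.label (ρ j).1) (ρ (j + 1)).2

/-- `ρ i … ρ k` is a fragment of the infinite run `ρ` (w.r.t. accepting set `F`):
both endpoints are accepting and no interior state is accepting. -/
def IsFragment {X : Type*} (F : Set X) (ρ : ℕ → X) (i k : ℕ) : Prop :=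
  i < k ∧ ρ i ∈ F ∧ ρ k ∈ F ∧ ∀ j, i < j → j < k → ρ j ∉ F

/-- Total weight of the segment from position `i` to position `k`, where `stepW j`
is the weight of the transition taken at position `j`. -/
def SegWeight (stepW : ℕ → ℕ) (i k : ℕ) : ℕ :=
  ∑ j ∈ Finset.Ico i k, stepW j

/-- The reward `C(ρ)` of the run `ρ` equals `c`: `c` is the maximum value that occurs
infinitely often in the sequence of fragment weights of `ρ`, i.e. fragments of weight `c`
occur infinitely often, and every value `v > c` occurs only finitely often. -/
def RunRewardIs {X : Type*} (F : Set X) (ρ : ℕ → X) (stepW : ℕ → ℕ) (c : ℕ) : Prop :=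
  (∀ N, ∃ i k, N ≤ i ∧ IsFragment F ρ i k ∧ SegWeight stepW i k = c) ∧
  (∀ v, c < v → ∃ N, ∀ i k, N ≤ i → IsFragment F ρ i k → SegWeight stepW i k ≠ v)

/-- A run is in prefix-suffix structure `ρ_pref · (ρ_suf)^ω` (with the first state
of `ρ_suf` accepting) iff it is eventually periodic with an accepting state at the
start of the periodic part. -/
def IsPrefixSuffix {X : Type*} (F : Set X) (ρ : ℕ → X) : Prop :=
  ∃ l k, 0 < k ∧ ρ l ∈ F ∧ ∀ i, l ≤ i → ρ (i + k) = ρ i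

/-- `f 0 f 1 … f k` is a finite path w.r.t. the edge relation `E`. -/
def IsFinPath {X : Type*} (E : Set (X × X)) (f : ℕ → X) (k : ℕ) : Prop :=
  ∀ t, t < k → (f t, f (t + 1)) ∈ E

/-- A fragment of a finite cycle `f 0 … f k`: a segment whose endpoints lie in `F` and
whose interior states do not. -/
def IsCycFrag {X : Type*} (F : Set X) (f : ℕ → X) (k i k' : ℕ) : Prop :=
  i < k' ∧ k' ≤ k ∧ f i ∈ F ∧ f k' ∈ F ∧ ∀ t, i < t → t < k' → f t ∉ F

section Construction

/-- The component set `C = {(j,l) : 1 ≤ j ≤ n, 1 ≤ l ≤ m_j} ∪ {(0,0)}` of the weighted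
Büchi automaton `B`; `none` plays the role of `(0,0)` and `some ⟨j,l⟩` (0-indexed) the
role of the component `(j+1, l+1)`. -/
abbrev BComp (n : ℕ) (m : Fin n → ℕ) : Type :=
  Option (Σ j : Fin n, Fin (m j))

variable {A : Type*} {n : ℕ} {Qs : Fin n → Type*} {m : Fin n → ℕ}

/-- The allowed moves between components of the weighted Büchi automaton `B`
(cases (1a), (1b), (2a), (2b), (2c), (2d)); `q` is the source tuple of GBA states. -/
def CompStep (G : ∀ j, GBA (Qs j) A (m j)) (q : ∀ j, Qs j) :
    BComp n m → BComp n m → Prop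
  | none, none => True
  | none, some jl' => (jl'.2 : ℕ) = 0
  | some jl, none => (jl.2 : ℕ) + 1 = m jl.1 ∧ q jl.1 ∈ (G jl.1).acc jl.2
  | some jl, some jl' =>
      (jl'.1 = jl.1 ∧ (jl'.2 : ℕ) = (jl.2 : ℕ) ∧ q jl.1 ∉ (G jl.1).acc jl.2) ∨
      (jl'.1 = jl.1 ∧ (jl'.2 : ℕ) = (jl.2 : ℕ) + 1 ∧ q jl.1 ∈ (G jl.1).acc jl.2) ∨
      ((jl.1 : ℕ) < (jl'.1 : ℕ) ∧ (jl.2 : ℕ) + 1 = m jl.1 ∧ (jl'.2 : ℕ) = 0 ∧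
        q jl.1 ∈ (G jl.1).acc jl.2)

/-- The weight of a transition of `B`, determined by the source and target components:
`rew j'` when newly entering the first component of layer `j'` (cases (1b), (2c)),
and `0` otherwise. -/
def CompWeight (rew : Fin n → ℕ) : BComp n m → BComp n m → ℕ
  | _, none => 0
  | c, some jl' => if (jl'.2 : ℕ) = 0 ∧ c ≠ some jl' then rew jl'.1 else 0

/-- The weighted Büchi automaton `B` built from the non-blocking GBAs `G 0, …, G (n-1)`:
state set `Q_1 × … × Q_n × C`, initial state `(q_init,1, …, q_init,n, (0,0))`,
accepting set `Q_1 × … × Q_n × {(0,0)}`. -/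
def BAut (G : ∀ j, GBA (Qs j) A (m j)) (_rew : Fin n → ℕ) :
    BA ((∀ j, Qs j) × BComp n m) A where
  init := (fun j => (G j).init, none)
  trans := {t | (∀ j, (t.1.1 j, t.2.1, t.2.2.1 j) ∈ (G j).trans) ∧
              CompStep G t.1.1 t.1.2 t.2.2.2}
  acc := {p | p.2 = none}

/-- The weight function `W : δ → ℕ` of the weighted Büchi automaton `B`. -/
def BWeight (rew : Fin n → ℕ) (p : (∀ j, Qs j) × BComp n m) (_ : A)
    (p' : (∀ j, Qs j) × BComp n m) : ℕ :=
  CompWeight rew p.2 p'.2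

open Classical in
/-- The reward of a trace `τ` of `T`: `Rew(τ) = Σ_{i, w(τ) ∈ L(G_i)} rew_i`. -/
noncomputable def TraceRew {S : Type*} (T : LTS S A) (G : ∀ j, GBA (Qs j) A (m j))
    (rew : Fin n → ℕ) (τ : ℕ → S) : ℕ :=
  ∑ j : Fin n, if T.word τ ∈ (G j).Lang then rew j else 0

end Construction

section Proof6

variable {A : Type*} {n : ℕ} {Qs : Fin n → Type*} {m : Fin n → ℕ}

/-- A non-blocking GBA has a run over every word. -/
theorem GBA.exists_run {Q A' : Type*} {m' : ℕ} (M : GBA Q A' m') (h : M.NonBlocking)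
    (w : ℕ → A') : ∃ ρ, M.IsRun w ρ := by
  choose f hf using h
  exact ⟨fun i => Nat.rec M.init (fun i q => f q (w i)) i, rfl, fun i => hf _ _⟩

open Classical in
/-- The scheduler for the component of the constructed run. -/
noncomputable def nextComp (hm : ∀ j, 0 < m j) (G : ∀ j, GBA (Qs j) A (m j))
    (I : Finset (Fin n)) (q : ∀ j, Qs j) : BComp n m → BComp n m
  | none => if h : I.Nonempty then some ⟨I.min' h, ⟨0, hm _⟩⟩ else none
  | some jl =>
      if q jl.1 ∈ (G jl.1).acc jl.2 then
        if h : (jl.2 : ℕ) + 1 < m jl.1 then some ⟨jl.1, ⟨(jl.2 : ℕ) + 1, h⟩⟩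
        else if h2 : (I.filter (fun j' => jl.1 < j')).Nonempty
          then some ⟨(I.filter (fun j' => jl.1 < j')).min' h2, ⟨0, hm _⟩⟩
          else none
      else some jl

/-- The component sequence of the constructed run. -/
noncomputable def comp (hm : ∀ j, 0 < m j) (G : ∀ j, GBA (Qs j) A (m j))
    (I : Finset (Fin n)) (ρs : ∀ j, ℕ → Qs j) : ℕ → BComp n m
  | 0 => none
  | i + 1 => nextComp hm G I (fun j => ρs j i) (comp hm G I ρs i)

open Classical in
/-- Potential function used to compute fragment weights by telescoping. -/
noncomputable def pot (rew : Fin n → ℕ) (I : Finset (Fin n)) : BComp n m → ℕ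
  | none => 0
  | some jl => ∑ j' ∈ I.filter (· ≤ jl.1), rew j'

open Classical in
/-- Termination measure for the scheduler. -/
noncomputable def mu (m : Fin n → ℕ) : BComp n m → ℕ
  | none => 0
  | some jl => (∑ j' ∈ Finset.univ.filter (fun x => jl.1 < x), m j') + (m jl.1 - (jl.2 : ℕ))

theorem compStep_nextComp (hm : ∀ j, 0 < m j) (G : ∀ j, GBA (Qs j) A (m j))
    (I : Finset (Fin n)) (q : ∀ j, Qs j) :
    ∀ cc : BComp n m, CompStep G q cc (nextComp hm G I q cc) := by
  classical
  intro cc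
  match cc with
  | none =>
    simp only [nextComp]
    split_ifs with h
    · exact rfl
    · trivial
  | some jl =>
    simp only [nextComp]
    split_ifs with h1 h2 h3
    · exact Or.inr (Or.inl ⟨rfl, rfl, h1⟩)
    · have hj := Finset.min'_mem _ h3
      rw [Finset.mem_filter] at hj
      exact Or.inr (Or.inr ⟨hj.2, by have := jl.2.isLt; omega, rfl, h1⟩)
    · exact ⟨by have := jl.2.isLt; omega, h1⟩
    · exact Or.inl ⟨rfl, rfl, h1⟩

theorem mu_nextComp (hm : ∀ j, 0 < m j) (G : ∀ j, GBA (Qs j) A (m j))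
    (I : Finset (Fin n)) (q : ∀ j, Qs j) (jl : Σ j : Fin n, Fin (m j))
    (h1 : q jl.1 ∈ (G jl.1).acc jl.2) :
    mu m (nextComp hm G I q (some jl)) < mu m (some jl) := by
  classical
  have hlt := jl.2.isLt
  simp only [nextComp, if_pos h1]
  split_ifs with h2 h3
  · simp only [mu]; omega
  · have hj'mem := Finset.min'_mem _ h3
    rw [Finset.mem_filter] at hj'mem
    simp only [mu]
    have hsub : insert ((I.filter (fun j'' => jl.1 < j'')).min' h3)
        (Finset.univ.filter (fun x => (I.filter (fun j'' => jl.1 < j'')).min' h3 < x)) ⊆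
        Finset.univ.filter (fun x => jl.1 < x) := by
      intro x hx
      simp only [Finset.mem_insert, Finset.mem_filter, Finset.mem_univ, true_and] at hx ⊢
      rcases hx with rfl | hx
      · exact hj'mem.2
      · exact lt_trans hj'mem.2 hx
    have hkey : m ((I.filter (fun j'' => jl.1 < j'')).min' h3) +
        ∑ x ∈ Finset.univ.filter (fun x => (I.filter (fun j'' => jl.1 < j'')).min' h3 < x), m x ≤
        ∑ x ∈ Finset.univ.filter (fun x => jl.1 < x), m x := by
      rw [← Finset.sum_insert (by simp)]
      exact Finset.sum_le_sum_of_subset hsub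
    omega
  · simp only [mu]
    omega

theorem pot_nextComp (hm : ∀ j, 0 < m j) (G : ∀ j, GBA (Qs j) A (m j))
    (I : Finset (Fin n)) (rew : Fin n → ℕ) (q : ∀ j, Qs j) (cc : BComp n m)
    (hne : nextComp hm G I q cc ≠ none) :
    pot rew I (nextComp hm G I q cc) =
      pot rew I cc + CompWeight rew cc (nextComp hm G I q cc) := by
  classical
  match cc with
  | none =>
    simp only [nextComp]
    split_ifs with h
    · have hmin := I.min'_mem h
      have hfilt : I.filter (· ≤ I.min' h) = {I.min' h} := by
        ext x
        simp only [Finset.mem_filter, Finset.mem_singleton]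
        constructor
        · rintro ⟨hx1, hx2⟩; exact le_antisymm hx2 (I.min'_le x hx1)
        · rintro rfl; exact ⟨hmin, le_rfl⟩
      simp only [pot, CompWeight, hfilt, Finset.sum_singleton]
      rw [if_pos]
      · omega
      · exact ⟨by simp, by simp⟩
    · simp [pot, CompWeight]
  | some jl =>
    simp only [nextComp]
    split_ifs with h1 h2 h3
    · -- move to next level, same j
      simp only [pot, CompWeight]
      rw [if_neg]
      · omega
      · rintro ⟨hz, -⟩; simp at hz
    · -- move to first level of next j' in I
      have hj'mem := Finset.min'_mem _ h3
      rw [Finset.mem_filter] at hj'mem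
      have hfilt : I.filter (· ≤ (I.filter (fun j'' => jl.1 < j'')).min' h3) =
          insert ((I.filter (fun j'' => jl.1 < j'')).min' h3) (I.filter (· ≤ jl.1)) := by
        ext x
        simp only [Finset.mem_filter, Finset.mem_insert]
        constructor
        · rintro ⟨hx1, hx2⟩
          by_cases hx3 : jl.1 < x
          · left
            exact le_antisymm hx2 (Finset.min'_le _ _ (Finset.mem_filter.mpr ⟨hx1, hx3⟩))
          · right; exact ⟨hx1, le_of_not_gt hx3⟩
        · rintro (rfl | ⟨hx1, hx2⟩)
          · exact ⟨hj'mem.1, le_rfl⟩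
          · exact ⟨hx1, le_trans hx2 (le_of_lt hj'mem.2)⟩
      have hnot : (I.filter (fun j'' => jl.1 < j'')).min' h3 ∉ I.filter (· ≤ jl.1) := by
        simp only [Finset.mem_filter, not_and]
        intro _
        exact not_le.mpr hj'mem.2
      simp only [pot, CompWeight, hfilt, Finset.sum_insert hnot]
      rw [if_pos]
      · omega
      · refine ⟨by simp, ?_⟩
        intro hcon
        rw [Option.some_inj] at hcon
        have hfst : jl.1 = (I.filter (fun j'' => jl.1 < j'')).min' h3 :=
          congrArg Sigma.fst hcon
        rw [← hfst] at hj'mem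
        exact absurd hj'mem.2 (lt_irrefl _)
    · exact absurd (show nextComp hm G I q (some jl) = none by
        simp only [nextComp, if_pos h1, dif_neg h2, dif_neg h3]) hne
    · -- stay put
      simp only [pot, CompWeight]
      rw [if_neg]
      · omega
      · rintro ⟨-, hz⟩; exact hz rfl
theorem pot_eq_sum (hm : ∀ j, 0 < m j) (G : ∀ j, GBA (Qs j) A (m j))
    (I : Finset (Fin n)) (rew : Fin n → ℕ) (q : ∀ j, Qs j) (jl : Σ j : Fin n, Fin (m j))
    (hjI : jl.1 ∈ I) (hnone : nextComp hm G I q (some jl) = none) :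
    pot rew I (some jl) = ∑ i ∈ I, rew i := by
  classical
  simp only [nextComp] at hnone
  split_ifs at hnone with h1 h2 h3
  have hall : ∀ x ∈ I, x ≤ jl.1 := by
      intro x hx
      by_contra hcon
      exact h3 ⟨x, Finset.mem_filter.mpr ⟨hx, lt_of_not_ge hcon⟩⟩
  simp only [pot, Finset.filter_true_of_mem hall]

end Proof6

/-- if `w ∈ L(G_i)` exactly for `i ∈ I`, then `B` has an accepting run `ρ`
over `w` with reward `C(ρ) = Σ_{i∈I} rew_i`. -/
theorem statement6 {A : Type*} [Finite A] {n : ℕ} {Qs : Fin n → Type*}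
    [∀ j, Finite (Qs j)] {m : Fin n → ℕ} (hm : ∀ j, 0 < m j)
    (G : ∀ j, GBA (Qs j) A (m j)) (hnb : ∀ j, (G j).NonBlocking)
    (rew : Fin n → ℕ) (hrew : ∀ i j : Fin n, i ≤ j → rew j ≤ rew i)
    (I : Finset (Fin n)) (w : ℕ → A)
    (hin : ∀ i ∈ I, w ∈ (G i).Lang) (hout : ∀ i ∉ I, w ∉ (G i).Lang) :
    ∃ ρ, (BAut G rew).IsRun w ρ ∧ (BAut G rew).IsAccepting ρ ∧
      RunRewardIs (BAut G rew).acc ρ (fun j => BWeight rew (ρ j) (w j) (ρ (j + 1)))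
        (∑ i ∈ I, rew i) := by
  classical
  -- choose runs of the G j
  have hex : ∀ j : Fin n, ∃ ρ', (G j).IsRun w ρ' ∧ (j ∈ I → (G j).IsAccepting ρ') := by
    intro j
    by_cases h : j ∈ I
    · obtain ⟨ρ', h1, h2⟩ := hin j h
      exact ⟨ρ', h1, fun _ => h2⟩
    · obtain ⟨ρ', h1⟩ := (G j).exists_run (hnb j) w
      exact ⟨ρ', h1, fun hj => absurd hj h⟩
  choose ρs hrunρ haccρ using hex
  have hstep : ∀ t, comp hm G I ρs (t + 1) =
      nextComp hm G I (fun j => ρs j t) (comp hm G I ρs t) := fun t => rfl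
  have hc0 : comp hm G I ρs 0 = none := rfl
  -- invariant: the layer of the component is always in I
  have hinv : ∀ t (jl : Σ j : Fin n, Fin (m j)),
      comp hm G I ρs t = some jl → jl.1 ∈ I := by
    intro t
    induction t with
    | zero => intro jl h; rw [hc0] at h; exact absurd h (by simp)
    | succ t ih =>
      intro jl h
      rw [hstep t] at h
      cases hct : comp hm G I ρs t with
      | none =>
        rw [hct] at h
        simp only [nextComp] at h
        split_ifs at h with h0
        obtain rfl := Option.some_inj.mp h.symm
        exact I.min'_mem h0
      | some jl0 =>
        rw [hct] at h
        simp only [nextComp] at h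
        split_ifs at h with h1 h2 h3
        · obtain rfl := Option.some_inj.mp h.symm
          exact ih jl0 hct
        · obtain rfl := Option.some_inj.mp h.symm
          have hmem := Finset.min'_mem _ h3
          rw [Finset.mem_filter] at hmem
          exact hmem.1
        · obtain rfl := Option.some_inj.mp h.symm
          exact ih _ hct
  -- termination: the component returns to none
  have hreach : ∀ t, ∃ k, t ≤ k ∧ comp hm G I ρs k = none := by
    have key : ∀ v t, mu m (comp hm G I ρs t) = v →
        ∃ k, t ≤ k ∧ comp hm G I ρs k = none := by
      intro v
      induction v using Nat.strong_induction_on with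
      | _ v ih =>
        intro t hv
        cases hct : comp hm G I ρs t with
        | none => exact ⟨t, le_rfl, hct⟩
        | some jl =>
          have hjI := hinv t jl hct
          have hexd : ∃ d, ρs jl.1 (t + d) ∈ (G jl.1).acc jl.2 := by
            obtain ⟨i0, hi0, hmem⟩ := haccρ jl.1 hjI jl.2 t
            exact ⟨i0 - t, by rwa [Nat.add_sub_cancel' hi0]⟩
          have hd0mem := Nat.find_spec hexd
          have hstay : ∀ e, e ≤ Nat.find hexd → comp hm G I ρs (t + e) = some jl := by
            intro e he
            induction e with
            | zero => simpa using hct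
            | succ e ihe =>
              have he' : e ≤ Nat.find hexd := Nat.le_of_succ_le he
              have hnot : ρs jl.1 (t + e) ∉ (G jl.1).acc jl.2 :=
                Nat.find_min hexd (by omega)
              rw [show t + (e + 1) = (t + e) + 1 by omega, hstep (t + e), ihe he']
              simp only [nextComp, if_neg hnot]
          have hc_td0 : comp hm G I ρs (t + Nat.find hexd) = some jl := hstay _ le_rfl
          have hdec : mu m (comp hm G I ρs (t + Nat.find hexd + 1)) < v := by
            rw [hstep (t + Nat.find hexd), hc_td0]
            rw [hct] at hv
            rw [← hv]
            exact mu_nextComp hm G I (fun j => ρs j (t + Nat.find hexd)) jl hd0mem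
          obtain ⟨k, hk1, hk2⟩ := ih _ hdec (t + Nat.find hexd + 1) rfl
          exact ⟨k, by omega, hk2⟩
    intro t
    exact key _ t rfl
  -- next visit to none
  have hfind : ∀ i, comp hm G I ρs i = none → ∃ k, i < k ∧ comp hm G I ρs k = none ∧
      ∀ t, i < t → t < k → comp hm G I ρs t ≠ none := by
    intro i _
    obtain ⟨k0, hk01, hk02⟩ := hreach (i + 1)
    have hexk : ∃ k, i < k ∧ comp hm G I ρs k = none := ⟨k0, by omega, hk02⟩
    refine ⟨Nat.find hexk, (Nat.find_spec hexk).1, (Nat.find_spec hexk).2, ?_⟩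
    intro t ht1 ht2 hcon
    exact Nat.find_min hexk ht2 ⟨ht1, hcon⟩
  -- potential telescoping step
  have hpotstep : ∀ t, comp hm G I ρs (t + 1) ≠ none →
      pot rew I (comp hm G I ρs (t + 1)) = pot rew I (comp hm G I ρs t) +
        CompWeight rew (comp hm G I ρs t) (comp hm G I ρs (t + 1)) := by
    intro t hne
    have h := pot_nextComp hm G I rew (fun j => ρs j t) (comp hm G I ρs t)
      (by rw [← hstep t]; exact hne)
    rw [← hstep t] at h
    exact h
  -- each fragment has weight ∑ i ∈ I, rew i
  have hfrag : ∀ i k, comp hm G I ρs i = none → comp hm G I ρs k = none → i < k →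
      (∀ t, i < t → t < k → comp hm G I ρs t ≠ none) →
      (∑ t ∈ Finset.Ico i k,
        CompWeight rew (comp hm G I ρs t) (comp hm G I ρs (t + 1))) = ∑ i ∈ I, rew i := by
    intro i k hci hck hik hint
    by_cases hk1 : k = i + 1
    · -- then I must be empty
      subst hk1
      have hnone : nextComp hm G I (fun j => ρs j i) (comp hm G I ρs i) = none := by
        rw [← hstep i]; exact hck
      rw [hci] at hnone
      simp only [nextComp] at hnone
      split_ifs at hnone with h0
      have hIe : I = ∅ := Finset.not_nonempty_iff_eq_empty.mp h0
      rw [Finset.sum_Ico_eq_sum_range]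
      simp only [Nat.add_sub_cancel_left, Finset.sum_range_one, Nat.add_zero]
      rw [hci, hck, hIe]
      simp [CompWeight]
    · have hik2 : i + 1 < k := by omega
      have hclaim : ∀ s, i + 1 ≤ s → s < k →
          (∑ t ∈ Finset.Ico i s,
            CompWeight rew (comp hm G I ρs t) (comp hm G I ρs (t + 1))) =
            pot rew I (comp hm G I ρs s) := by
        intro s hs
        induction s, hs using Nat.le_induction with
        | base =>
          intro hk
          rw [show Finset.Ico i (i + 1) = {i} by rw [Finset.Ico_add_one_right_eq_Icc, Finset.Icc_self],
            Finset.sum_singleton, hci]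
          have h1 := hpotstep i (hint (i + 1) (by omega) hk)
          rw [hci] at h1
          rw [h1]
          simp [pot]
        | succ s hs ihs =>
          intro hk
          rw [Finset.sum_Ico_succ_top (by omega), ihs (by omega)]
          exact (hpotstep s (hint (s + 1) (by omega) hk)).symm
      cases k with
      | zero => omega
      | succ k' =>
        rw [Finset.sum_Ico_succ_top (by omega), hclaim k' (by omega) (by omega)]
        have hck' : comp hm G I ρs (k' + 1) = none := hck
        rw [hck']
        obtain ⟨jl, hjl⟩ : ∃ jl, comp hm G I ρs k' = some jl := by
          cases hc : comp hm G I ρs k' with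
          | none => exact absurd hc (hint k' (by omega) (by omega))
          | some jl => exact ⟨jl, rfl⟩
        have hnone : nextComp hm G I (fun j => ρs j k') (some jl) = none := by
          rw [← hjl, ← hstep k']; exact hck
        rw [hjl]
        rw [pot_eq_sum hm G I rew (fun j => ρs j k') jl (hinv k' jl hjl) hnone]
        simp [CompWeight]
  -- assemble the run
  refine ⟨fun t => (fun j => ρs j t, comp hm G I ρs t), ⟨?_, ?_⟩, ?_, ?_, ?_⟩
  · -- initial state
    have h1 : (fun j => ρs j 0) = fun j => (G j).init := funext fun j => (hrunρ j).1
    show ((fun j => ρs j 0 : ∀ j, Qs j), comp hm G I ρs 0) = (BAut G rew).init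
    rw [h1, hc0]
    rfl
  · -- transitions
    intro t
    refine ⟨fun j => (hrunρ j).2 t, ?_⟩
    show CompStep G (fun j => ρs j t) (comp hm G I ρs t) (comp hm G I ρs (t + 1))
    rw [hstep t]
    exact compStep_nextComp hm G I (fun j => ρs j t) (comp hm G I ρs t)
  · -- accepting
    intro N
    obtain ⟨k, hk1, hk2⟩ := hreach N
    exact ⟨k, hk1, hk2⟩
  · -- fragments of weight ∑ rew occur infinitely often
    intro N
    obtain ⟨i, hiN, hci⟩ := hreach N
    obtain ⟨k, hik, hck, hint⟩ := hfind i hci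
    exact ⟨i, k, hiN, ⟨hik, hci, hck, fun t h1 h2 => hint t h1 h2⟩,
      hfrag i k hci hck hik hint⟩
  · -- no larger value occurs
    intro v hv
    refine ⟨0, fun i k _ hf => ?_⟩
    obtain ⟨hik, hci, hck, hint⟩ := hf
    have h2 := hfrag i k hci hck hik (fun t h1 h2 => hint t h1 h2)
    simp only [SegWeight, BWeight]
    omega
end

section
/- Let B be the weighted Büchi automaton constructed from non-blocking generalized Büchi automata G_1, …, G_n with rewards rew_1 ≥ … ≥ rew_n. Let I ⊆ {1,…,n} and let w be an infinite word over Σ such that w ∈ L(G_i) for every i ∈ I and w ∉ L(G_i) for every i ∉ I. Then every accepting run ρ' of B over w satisfies C(ρ') ≤ Σ_{i∈I} rew_i. -/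
/-!
Along an accepting run of `B`, a GBA `G_j` whose layer `j` is visited infinitely often
accepts `w`: the layer is always entered at its first component, and the run can only move
from component `(j,l)` to `(j,l+1)` or out of layer `j` through a state of `F_j^l`. Since the
run returns to `(0,0)` infinitely often, each of these exits happens infinitely often, so
the projection of the run to `G_j` visits every `F_j^l` infinitely often. Hence from some
point on the run only visits layers `j` with `w ∈ L(G_j)`, i.e. `j ∈ I`. Inside a fragment the
layer index never decreases and strictly increases at each transition of positive weight,
which therefore collects each `rew_j` at most once: every late fragment weighs at most
`∑_{j ∈ I} rew_j`.
-/

open Filter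

theorem Nat.frequently_and_not_succ {p : ℕ → Prop} (h₁ : ∃ᶠ t in atTop, p t)
    (h₂ : ∃ᶠ t in atTop, ¬ p t) : ∃ᶠ t in atTop, p t ∧ ¬ p (t + 1) := by
  rw [frequently_atTop] at *
  intro N
  obtain ⟨a, hNa, ha⟩ := h₁ N
  obtain ⟨b, hab, hb⟩ := h₂ a
  induction b, hab using Nat.le_induction with
  | base => exact absurd ha hb
  | succ b hab ih =>
    by_cases hpb : p b
    · exact ⟨b, hNa.trans hab, hpb, hb⟩
    · exact ih hpb

namespace BComp

variable {n : ℕ} {m : Fin n → ℕ}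

def layer : BComp n m → WithBot (Fin n)
  | none => ⊥
  | some jl => jl.1

@[simp] lemma layer_none : layer (none : BComp n m) = ⊥ := rfl

lemma layer_eq_coe_iff {c : BComp n m} {j : Fin n} : c.layer = j ↔ ∃ l, c = some ⟨j, l⟩ := by
  constructor
  · rcases c with _ | ⟨j', l⟩
    · simp
    · intro h
      obtain rfl : j' = j := WithBot.coe_injective h
      exact ⟨l, rfl⟩
  · rintro ⟨l, rfl⟩
    rfl

end BComp

lemma CompWeight.exists_of_ne_zero {n : ℕ} {m : Fin n → ℕ} {rew : Fin n → ℕ} {c c' : BComp n m}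
    (h : CompWeight rew c c' ≠ 0) :
    ∃ jl', c' = some jl' ∧ (jl'.2 : ℕ) = 0 ∧ c ≠ some jl' ∧ CompWeight rew c c' = rew jl'.1 := by
  rcases c' with _ | jl'
  · exact absurd rfl h
  · by_cases hentry : (jl'.2 : ℕ) = 0 ∧ c ≠ some jl'
    · exact ⟨jl', rfl, hentry.1, hentry.2, if_pos hentry⟩
    · exact absurd (if_neg hentry) h

namespace CompStep

variable {A : Type*} {n : ℕ} {Qs : Fin n → Type*} {m : Fin n → ℕ}
  {G : ∀ j, GBA (Qs j) A (m j)} {q : ∀ j, Qs j} {c c' : BComp n m}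

lemma mem_acc_of_ne {jl : Σ j : Fin n, Fin (m j)} (h : CompStep G q (some jl) c')
    (hne : c' ≠ some jl) : q jl.1 ∈ (G jl.1).acc jl.2 := by
  rcases c' with _ | ⟨j', l'⟩
  · exact h.2
  · obtain ⟨j, l⟩ := jl
    rcases h with ⟨h1, h2, -⟩ | ⟨-, -, hacc⟩ | ⟨-, -, -, hacc⟩
    · dsimp only at h1 h2
      subst h1
      exact absurd (by rw [Fin.ext h2]) hne
    · exact hacc
    · exact hacc

lemma eq_next_of_ne {jl : Σ j : Fin n, Fin (m j)} (h : CompStep G q (some jl) c')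
    (hne : c' ≠ some jl) (hl : (jl.2 : ℕ) + 1 < m jl.1) :
    c' = some ⟨jl.1, ⟨jl.2 + 1, hl⟩⟩ := by
  rcases c' with _ | ⟨j', l'⟩
  · exact absurd h.1 hl.ne
  · obtain ⟨j, l⟩ := jl
    rcases h with ⟨h1, h2, -⟩ | ⟨h1, h2, -⟩ | ⟨-, h2, -⟩
    · dsimp only at h1 h2
      subst h1
      exact absurd (by rw [Fin.ext h2]) hne
    · dsimp only at h1 h2
      subst h1
      rw [show l' = ⟨l + 1, hl⟩ from Fin.ext h2]
    · exact absurd h2 hl.ne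

lemma level_eq_zero {jl' : Σ j : Fin n, Fin (m j)} (h : CompStep G q c (some jl'))
    (hc : c.layer ≠ jl'.1) : (jl'.2 : ℕ) = 0 := by
  rcases c with _ | jl
  · exact h
  · rcases h with ⟨h1, -⟩ | ⟨h1, -⟩ | ⟨-, -, h0, -⟩
    · exact absurd (congrArg _ h1.symm) hc
    · exact absurd (congrArg _ h1.symm) hc
    · exact h0

lemma layer_le (h : CompStep G q c c') (hc' : c' ≠ none) : c.layer ≤ c'.layer := by
  rcases c with _ | jl
  · exact bot_le
  rcases c' with _ | jl'
  · exact absurd rfl hc'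
  rcases h with ⟨h1, -⟩ | ⟨h1, -⟩ | ⟨hlt, -⟩
  · exact (congrArg _ h1.symm).le
  · exact (congrArg _ h1.symm).le
  · exact WithBot.coe_le_coe.mpr hlt.le

lemma layer_lt {jl' : Σ j : Fin n, Fin (m j)} (h : CompStep G q c (some jl'))
    (h0 : (jl'.2 : ℕ) = 0) (hne : c ≠ some jl') : c.layer < jl'.1 := by
  rcases c with _ | ⟨j, l⟩
  · exact WithBot.bot_lt_coe _
  obtain ⟨j', l'⟩ := jl'
  rcases h with ⟨h1, h2, -⟩ | ⟨-, h2, -⟩ | ⟨hlt, -⟩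
  · dsimp only at h1 h2
    subst h1
    exact absurd (by rw [Fin.ext h2]) hne
  · dsimp only at h0 h2
    omega
  · exact WithBot.coe_lt_coe.mpr hlt

end CompStep

section Run

variable {A : Type*} {n : ℕ} {Qs : Fin n → Type*} {m : Fin n → ℕ}
  {G : ∀ j, GBA (Qs j) A (m j)} {rew : Fin n → ℕ} {w : ℕ → A}
  {ρ : ℕ → (∀ j, Qs j) × BComp n m}

lemma BA.IsRun.compStep (hρ : (BAut G rew).IsRun w ρ) (t : ℕ) :
    CompStep G (ρ t).1 (ρ t).2 (ρ (t + 1)).2 :=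
  (hρ.2 t).2

lemma BA.IsAccepting.frequently_none (hacc : (BAut G rew).IsAccepting ρ) :
    ∃ᶠ t in atTop, (ρ t).2 = none :=
  frequently_atTop.mpr hacc

lemma BA.IsAccepting.frequently_exit (hacc : (BAut G rew).IsAccepting ρ)
    {jl : Σ j : Fin n, Fin (m j)} (h : ∃ᶠ t in atTop, (ρ t).2 = some jl) :
    ∃ᶠ t in atTop, (ρ t).2 = some jl ∧ (ρ (t + 1)).2 ≠ some jl :=
  Nat.frequently_and_not_succ h (hacc.frequently_none.mono fun _ ht => by simp [ht])

lemma frequently_mem_acc_of_frequently (hρ : (BAut G rew).IsRun w ρ)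
    (hacc : (BAut G rew).IsAccepting ρ) {jl : Σ j : Fin n, Fin (m j)}
    (h : ∃ᶠ t in atTop, (ρ t).2 = some jl) :
    ∃ᶠ t in atTop, (ρ t).1 jl.1 ∈ (G jl.1).acc jl.2 := by
  refine (hacc.frequently_exit h).mono fun t ⟨hcur, hnext⟩ => ?_
  have hstep := hρ.compStep t
  rw [hcur] at hstep
  exact hstep.mem_acc_of_ne hnext

lemma frequently_comp_of_frequently_layer (hρ : (BAut G rew).IsRun w ρ)
    (hacc : (BAut G rew).IsAccepting ρ) {j : Fin n}
    (h : ∃ᶠ t in atTop, (ρ t).2.layer = j) (l : Fin (m j)) :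
    ∃ᶠ t in atTop, (ρ t).2 = some ⟨j, l⟩ := by
  obtain ⟨l, hl⟩ := l
  induction l with
  | zero =>
    have houtside : ∃ᶠ t in atTop, (ρ t).2.layer ≠ j :=
      hacc.frequently_none.mono fun _ ht => by simp [ht]
    refine (tendsto_add_atTop_nat 1).frequently <|
      (Nat.frequently_and_not_succ houtside (by simpa using h)).mono ?_
    rintro t ⟨hout, hin⟩
    obtain ⟨l', hl'⟩ := BComp.layer_eq_coe_iff.mp (not_not.mp hin)
    have hstep := hρ.compStep t
    rw [hl'] at hstep
    rwa [show l' = ⟨0, hl⟩ from Fin.ext (hstep.level_eq_zero hout)] at hl'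
  | succ l ih =>
    refine (tendsto_add_atTop_nat 1).frequently <|
      (hacc.frequently_exit (ih (by omega))).mono fun t ⟨hcur, hnext⟩ => ?_
    have hstep := hρ.compStep t
    rw [hcur] at hstep
    exact hstep.eq_next_of_ne hnext hl

theorem mem_lang_of_frequently_layer (hρ : (BAut G rew).IsRun w ρ)
    (hacc : (BAut G rew).IsAccepting ρ) {j : Fin n}
    (h : ∃ᶠ t in atTop, (ρ t).2.layer = j) : w ∈ (G j).Lang :=
  ⟨fun t => (ρ t).1 j, ⟨congrFun (congrArg Prod.fst hρ.1) j, fun t => (hρ.2 t).1 j⟩,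
    fun l => frequently_atTop.mp <|
      frequently_mem_acc_of_frequently hρ hacc (frequently_comp_of_frequently_layer hρ hacc h l)⟩

theorem IsFragment.layer_mono (hρ : (BAut G rew).IsRun w ρ) {i k : ℕ}
    (hfrag : IsFragment (BAut G rew).acc ρ i k) {a b : ℕ} (hia : i ≤ a) (hab : a ≤ b)
    (hbk : b < k) : (ρ a).2.layer ≤ (ρ b).2.layer := by
  induction b, hab using Nat.le_induction with
  | base => exact le_rfl
  | succ b hab ih =>
    exact (ih (by omega)).trans ((hρ.compStep b).layer_le (hfrag.2.2.2 _ (by omega) hbk))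

theorem IsFragment.exists_entry_of_compWeight_ne_zero (hρ : (BAut G rew).IsRun w ρ) {i k : ℕ}
    (hfrag : IsFragment (BAut G rew).acc ρ i k) {t : ℕ} (htk : t < k)
    (hne : CompWeight rew (ρ t).2 (ρ (t + 1)).2 ≠ 0) :
    ∃ j : Fin n, (ρ (t + 1)).2.layer = j ∧ t + 1 < k ∧ (ρ t).2.layer < j ∧
      CompWeight rew (ρ t).2 (ρ (t + 1)).2 = rew j := by
  obtain ⟨jl, hjl, h0, hchange, hw⟩ := CompWeight.exists_of_ne_zero hne
  have hstep := hρ.compStep t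
  rw [hjl] at hstep
  have hsucc_ne : t + 1 ≠ k := by
    rintro rfl
    exact Option.some_ne_none _ (hjl.symm.trans hfrag.2.2.1)
  exact ⟨jl.1, by rw [hjl]; rfl, by omega, hstep.layer_lt h0 hchange, hw⟩

theorem segWeight_le_of_isFragment (hρ : (BAut G rew).IsRun w ρ) {i k : ℕ}
    (hfrag : IsFragment (BAut G rew).acc ρ i k) {S : Finset (Fin n)}
    (hS : ∀ t, i < t → ∀ j : Fin n, (ρ t).2.layer = j → j ∈ S) :
    SegWeight (fun t => BWeight rew (ρ t) (w t) (ρ (t + 1))) i k ≤ ∑ j ∈ S, rew j := by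
  classical
  set T := (Finset.Ico i k).filter fun t => CompWeight rew (ρ t).2 (ρ (t + 1)).2 ≠ 0
  have hentry : ∀ t ∈ T, ∃ j : Fin n, (ρ (t + 1)).2.layer = j ∧ i ≤ t ∧ t + 1 < k ∧
      (ρ t).2.layer < j ∧ CompWeight rew (ρ t).2 (ρ (t + 1)).2 = rew j := by
    intro t ht
    obtain ⟨htI, hne⟩ := Finset.mem_filter.mp ht
    obtain ⟨hit, htk⟩ := Finset.mem_Ico.mp htI
    obtain ⟨j, hj, hsucc, hlt, hw⟩ := hfrag.exists_entry_of_compWeight_ne_zero hρ htk hne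
    exact ⟨j, hj, hit, hsucc, hlt, hw⟩
  have hstrict : StrictMonoOn (fun t => (ρ (t + 1)).2.layer) T := by
    intro a ha b hb hab
    obtain ⟨-, -, hia, -, -, -⟩ := hentry a ha
    obtain ⟨jb, hjb, -, hbk, hlt, -⟩ := hentry b hb
    calc (ρ (a + 1)).2.layer ≤ (ρ b).2.layer := hfrag.layer_mono hρ (by omega) hab (by omega)
      _ < (ρ (b + 1)).2.layer := hjb ▸ hlt
  have himage : T.image (fun t => (ρ (t + 1)).2.layer) ⊆ S.image (↑) := by
    simp only [Finset.subset_iff, Finset.mem_image]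
    rintro _ ⟨t, ht, rfl⟩
    obtain ⟨j, hj, hit, -⟩ := hentry t ht
    exact ⟨j, hS (t + 1) (by omega) j hj, hj.symm⟩
  let weight : WithBot (Fin n) → ℕ := WithBot.recBotCoe 0 rew
  calc SegWeight _ i k = ∑ t ∈ T, CompWeight rew (ρ t).2 (ρ (t + 1)).2 :=
        (Finset.sum_filter_ne_zero _).symm
    _ = ∑ o ∈ T.image (fun t => (ρ (t + 1)).2.layer), weight o := by
      rw [Finset.sum_image hstrict.injOn]
      refine Finset.sum_congr rfl fun t ht => ?_
      obtain ⟨j, hj, -, -, -, hw⟩ := hentry t ht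
      rw [hw, hj]
      rfl
    _ ≤ ∑ o ∈ S.image (↑), weight o := Finset.sum_le_sum_of_subset himage
    _ = ∑ j ∈ S, rew j := Finset.sum_image fun _ _ _ _ h => WithBot.coe_injective h

end Run

theorem statement7_general {A : Type*} {n : ℕ} {Qs : Fin n → Type*} {m : Fin n → ℕ}
    (G : ∀ j, GBA (Qs j) A (m j)) (rew : Fin n → ℕ) (I : Finset (Fin n)) (w : ℕ → A)
    (hout : ∀ i ∉ I, w ∉ (G i).Lang)
    (ρ : ℕ → (∀ j, Qs j) × BComp n m) (c : ℕ)
    (hρ : (BAut G rew).IsRun w ρ) (hacc : (BAut G rew).IsAccepting ρ)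
    (hc : RunRewardIs (BAut G rew).acc ρ
      (fun j => BWeight rew (ρ j) (w j) (ρ (j + 1))) c) :
    c ≤ ∑ i ∈ I, rew i := by
  have hlate : ∀ᶠ t in atTop, ∀ j : Fin n, (ρ t).2.layer = j → j ∈ I := by
    refine eventually_all.mpr fun j => ?_
    by_cases hj : j ∈ I
    · exact Eventually.of_forall fun _ _ => hj
    · have hrare := not_frequently.mp fun h => hout j hj (mem_lang_of_frequently_layer hρ hacc h)
      exact hrare.mono fun _ ht h => absurd h ht
  obtain ⟨N, hN⟩ := eventually_atTop.mp hlate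
  obtain ⟨i, k, hNi, hfrag, rfl⟩ := hc.1 N
  exact segWeight_le_of_isFragment hρ hfrag fun t hit => hN t (by omega)

/-- if `w ∈ L(G_i)` exactly for `i ∈ I`, then every accepting run `ρ'` of
`B` over `w` satisfies `C(ρ') ≤ Σ_{i∈I} rew_i`. -/
theorem statement7 {A : Type*} [Finite A] {n : ℕ} {Qs : Fin n → Type*}
    [∀ j, Finite (Qs j)] {m : Fin n → ℕ} (hm : ∀ j, 0 < m j)
    (G : ∀ j, GBA (Qs j) A (m j)) (hnb : ∀ j, (G j).NonBlocking)
    (rew : Fin n → ℕ) (hrew : ∀ i j : Fin n, i ≤ j → rew j ≤ rew i)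
    (I : Finset (Fin n)) (w : ℕ → A)
    (hin : ∀ i ∈ I, w ∈ (G i).Lang) (hout : ∀ i ∉ I, w ∉ (G i).Lang)
    (ρ : ℕ → (∀ j, Qs j) × BComp n m) (c : ℕ)
    (hρ : (BAut G rew).IsRun w ρ) (hacc : (BAut G rew).IsAccepting ρ)
    (hc : RunRewardIs (BAut G rew).acc ρ
      (fun j => BWeight rew (ρ j) (w j) (ρ (j + 1))) c) :
    c ≤ ∑ i ∈ I, rew i :=
  statement7_general G rew I w hout ρ c hρ hacc hc
end

section
/- Let T be a labeled transition system, let B be the weighted Büchi automaton constructed from non-blocking generalized Büchi automata G_1, …, G_n with rewards rew_1 ≥ … ≥ rew_n, and let P = T ⊗ B. For every trace τ of T there exists an accepting run ρ_P of P with α(ρ_P) = τ and C(ρ_P) = Rew(τ). -/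
namespace S9

variable {n : ℕ}

section

variable (m : Fin n → ℕ) (hm : ∀ j, 0 < m j) (P : (j : Fin n) → Fin (m j) → ℕ → Prop)
  (J : Finset (Fin n)) (rew : Fin n → ℕ)

/-- The set of accepted indices strictly above `o` (all of `J` if `o = none`). -/
def Ab : Option (Fin n) → Finset (Fin n)
  | none => J
  | some j => J.filter (fun x => j < x)

/-- The component entered after finishing layer `o` (or from `(0,0)` if `o = none`). -/
noncomputable def nxt (o : Option (Fin n)) : BComp n m :=
  if h : (Ab J o).Nonempty then some ⟨(Ab J o).min' h, ⟨0, hm _⟩⟩ else none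

lemma nxt_neg {o : Option (Fin n)} (h : ¬ (Ab J o).Nonempty) : nxt m hm J o = none :=
  dif_neg h

lemma nxt_pos {o : Option (Fin n)} (h : (Ab J o).Nonempty) :
    nxt m hm J o = some ⟨(Ab J o).min' h, ⟨0, hm _⟩⟩ :=
  dif_pos h

open Classical in
/-- One step of the component schedule at time `i`. -/
noncomputable def step (i : ℕ) : BComp n m → BComp n m
  | none => nxt m hm J none
  | some jl =>
      if P jl.1 jl.2 i then
        (if h : (jl.2 : ℕ) + 1 < m jl.1 then some ⟨jl.1, ⟨(jl.2 : ℕ) + 1, h⟩⟩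
         else nxt m hm J (some jl.1))
      else some jl

/-- The component schedule. -/
noncomputable def cseq : ℕ → BComp n m
  | 0 => none
  | i + 1 => step m hm P J i (cseq i)

lemma cseq_succ (i : ℕ) : cseq m hm P J (i + 1) = step m hm P J i (cseq m hm P J i) := rfl

/-- The induced step weights. -/
noncomputable def sw (i : ℕ) : ℕ :=
  CompWeight rew (cseq m hm P J i) (cseq m hm P J (i + 1))

/-- Exit weight of layer `j`. -/
noncomputable def exitW (j : Fin n) : ℕ :=
  if h : (Ab J (some j)).Nonempty then rew ((Ab J (some j)).min' h) else 0

lemma w_same (x : Σ j : Fin n, Fin (m j)) :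
    CompWeight rew (some x) (some x) = 0 := by
  simp [CompWeight]

lemma compWeight_nxt (j : Fin n) (l : Fin (m j)) :
    CompWeight rew (some ⟨j, l⟩) (nxt m hm J (some j)) = exitW J rew j := by
  unfold nxt exitW
  split_ifs with h
  · have hjj : j < (Ab J (some j)).min' h := by
      have := Finset.min'_mem _ h
      simp only [Ab, Finset.mem_filter] at this
      exact this.2
    have hne : (some ⟨j, l⟩ : BComp n m) ≠ some ⟨(Ab J (some j)).min' h, ⟨0, hm _⟩⟩ := by
      intro hh
      injection hh with hh'
      exact absurd (congrArg Sigma.fst hh') (ne_of_lt hjj)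
    simp [CompWeight, hne]
  · rfl

lemma ab_insert (o : Option (Fin n)) (h : (Ab J o).Nonempty) :
    Ab J o = insert ((Ab J o).min' h) (Ab J (some ((Ab J o).min' h))) := by
  have hmem := Finset.min'_mem _ h
  ext x
  simp only [Finset.mem_insert]
  constructor
  · intro hx
    rcases eq_or_ne x ((Ab J o).min' h) with rfl | hne
    · exact Or.inl rfl
    · refine Or.inr ?_
      have hxJ : x ∈ J := by
        cases o with
        | none => exact hx
        | some j => exact (Finset.mem_filter.mp hx).1
      have hle := Finset.min'_le _ x hx
      exact Finset.mem_filter.mpr ⟨hxJ, lt_of_le_of_ne hle (Ne.symm hne)⟩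
  · rintro (rfl | hx)
    · exact hmem
    · obtain ⟨hxJ, hlt⟩ := Finset.mem_filter.mp hx
      cases o with
      | none => exact hxJ
      | some j =>
        have hj : j < (Ab J (some j)).min' h := (Finset.mem_filter.mp hmem).2
        exact Finset.mem_filter.mpr ⟨hxJ, lt_trans hj hlt⟩

lemma min'_not_mem_ab (y : Fin n) : y ∉ Ab J (some y) := by
  simp [Ab]

lemma cseq_inv : ∀ i (jl : Σ j : Fin n, Fin (m j)), cseq m hm P J i = some jl → jl.1 ∈ J := by
  intro i
  induction i with
  | zero => intro jl h; simp [cseq] at h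
  | succ i ih =>
    intro jl h
    rw [cseq_succ] at h
    rcases hc : cseq m hm P J i with _ | jl0 <;> rw [hc] at h
    · simp only [step] at h
      unfold nxt at h
      split_ifs at h with h1
      cases h
      exact (Finset.min'_mem _ h1)
    · simp only [step] at h
      split_ifs at h with h1 h2
      · cases h; exact ih jl0 hc
      · unfold nxt at h
        split_ifs at h with h3
        cases h
        exact (Finset.mem_filter.mp (Finset.min'_mem _ h3)).1
      · cases h; exact ih _ hc

lemma stay (jl : Σ j : Fin n, Fin (m j)) (i t : ℕ) (h : cseq m hm P J i = some jl)
    (hno : ∀ s, i ≤ s → s < t → ¬ P jl.1 jl.2 s) :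
    ∀ s, i ≤ s → s ≤ t → cseq m hm P J s = some jl := by
  intro s hs
  induction s, hs using Nat.le_induction with
  | base => intro _; exact h
  | succ s hs ih =>
    intro hst
    have hst' : s < t := hst
    have hcs := ih (le_of_lt hst')
    rw [cseq_succ, hcs]
    simp only [step]
    rw [if_neg (hno s hs hst')]

lemma phase (j : Fin n) (hj : ∀ l N, ∃ t, N ≤ t ∧ P j l t) (l : Fin (m j)) (i : ℕ)
    (h : cseq m hm P J i = some ⟨j, l⟩) :
    ∃ t, i ≤ t ∧ (∀ s, i ≤ s → s ≤ t → cseq m hm P J s = some ⟨j, l⟩) ∧ P j l t := by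
  classical
  obtain ⟨t0, h1, h2⟩ := hj l i
  have hex : ∃ s, i ≤ s ∧ P j l s := ⟨t0, h1, h2⟩
  have hspec := Nat.find_spec hex
  refine ⟨Nat.find hex, hspec.1, ?_, hspec.2⟩
  exact stay m hm P J ⟨j, l⟩ i (Nat.find hex) h
    (fun s hs hst hP => Nat.find_min hex hst ⟨hs, hP⟩)

lemma layer (j : Fin n) (hj : ∀ l N, ∃ t, N ≤ t ∧ P j l t) :
    ∀ d (l : Fin (m j)), m j - (l : ℕ) = d → ∀ i, cseq m hm P J i = some ⟨j, l⟩ →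
    ∃ k, i < k ∧ (∀ s, i ≤ s → s < k → ∃ l', cseq m hm P J s = some ⟨j, l'⟩) ∧
      cseq m hm P J k = nxt m hm J (some j) ∧
      SegWeight (sw m hm P J rew) i k = exitW J rew j := by
  intro d
  induction d using Nat.strong_induction_on with
  | _ d ih =>
  intro l hd i hi
  obtain ⟨t, hit, hconst, hPt⟩ := phase m hm P J j hj l i hi
  have hct : cseq m hm P J t = some ⟨j, l⟩ := hconst t hit le_rfl
  have hzero : ∀ s, i ≤ s → s < t → sw m hm P J rew s = 0 := by
    intro s h1 h2
    have e1 := hconst s h1 (le_of_lt h2)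
    have e2 := hconst (s + 1) (le_trans h1 (Nat.le_succ s)) h2
    unfold sw
    rw [e1, e2]
    exact w_same m rew _
  have hstep1 : cseq m hm P J (t + 1) =
      if h : (l : ℕ) + 1 < m j then some ⟨j, ⟨(l : ℕ) + 1, h⟩⟩ else nxt m hm J (some j) := by
    rw [cseq_succ, hct]
    simp only [step]
    rw [if_pos hPt]
  by_cases h2 : (l : ℕ) + 1 < m j
  · rw [dif_pos h2] at hstep1
    have hd' : m j - ((l : ℕ) + 1) < d := by
      subst hd
      exact Nat.sub_lt_sub_left l.isLt (Nat.lt_succ_self _)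
    obtain ⟨k, hk1, hk2, hk3, hk4⟩ := ih _ hd' ⟨(l : ℕ) + 1, h2⟩ rfl (t + 1) hstep1
    refine ⟨k, by omega, ?_, hk3, ?_⟩
    · intro s hs1 hs2
      by_cases hst : s ≤ t
      · exact ⟨l, hconst s hs1 hst⟩
      · exact hk2 s (by omega) hs2
    · have hsplit : SegWeight (sw m hm P J rew) i (t + 1) +
          SegWeight (sw m hm P J rew) (t + 1) k = SegWeight (sw m hm P J rew) i k :=
        Finset.sum_Ico_consecutive _ (by omega) (le_of_lt hk1)
      have h0 : SegWeight (sw m hm P J rew) i (t + 1) = 0 := by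
        unfold SegWeight
        rw [Finset.sum_Ico_succ_top hit]
        have hz : ∑ s ∈ Finset.Ico i t, sw m hm P J rew s = 0 :=
          Finset.sum_eq_zero (fun s hs => by
            rw [Finset.mem_Ico] at hs
            exact hzero s hs.1 hs.2)
        rw [hz]
        have : sw m hm P J rew t = 0 := by
          unfold sw
          rw [hct, hstep1]
          simp [CompWeight]
        rw [this]
      omega
  · rw [dif_neg h2] at hstep1
    refine ⟨t + 1, by omega, ?_, hstep1, ?_⟩
    · intro s hs1 hs2
      exact ⟨l, hconst s hs1 (by omega)⟩
    · unfold SegWeight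
      rw [Finset.sum_Ico_succ_top hit]
      have hz : ∑ s ∈ Finset.Ico i t, sw m hm P J rew s = 0 :=
        Finset.sum_eq_zero (fun s hs => by
          rw [Finset.mem_Ico] at hs
          exact hzero s hs.1 hs.2)
      rw [hz]
      have : sw m hm P J rew t = exitW J rew j := by
        unfold sw
        rw [hct, hstep1]
        exact compWeight_nxt m hm J rew j l
      rw [this, zero_add]

lemma tour (hP : ∀ j ∈ J, ∀ l N, ∃ t, N ≤ t ∧ P j l t) :
    ∀ N (j : Fin n), j ∈ J → (Ab J (some j)).card = N → ∀ (l : Fin (m j)) i,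
      cseq m hm P J i = some ⟨j, l⟩ →
    ∃ k, i < k ∧ (∀ s, i ≤ s → s < k → cseq m hm P J s ≠ none) ∧ cseq m hm P J k = none ∧
      SegWeight (sw m hm P J rew) i k = ∑ j' ∈ Ab J (some j), rew j' := by
  intro N
  induction N using Nat.strong_induction_on with
  | _ N ih =>
  intro j hjJ hcard l i hi
  obtain ⟨k₁, hk1, hint, hk3, hk4⟩ :=
    layer m hm P J rew j (hP j hjJ) (m j - (l : ℕ)) l rfl i hi
  by_cases hne : (Ab J (some j)).Nonempty
  · have hmem := Finset.min'_mem _ hne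
    set j'' := (Ab J (some j)).min' hne with hj''
    have hj''J : j'' ∈ J := (Finset.mem_filter.mp hmem).1
    have hck1 : cseq m hm P J k₁ = some ⟨j'', ⟨0, hm _⟩⟩ := by
      rw [hk3, nxt_pos m hm J hne]
    have hsub : Ab J (some j'') ⊆ Ab J (some j) := by
      intro x hx
      obtain ⟨hxJ, hlt⟩ := Finset.mem_filter.mp hx
      exact Finset.mem_filter.mpr ⟨hxJ, lt_trans (Finset.mem_filter.mp hmem).2 hlt⟩
    have hlt : (Ab J (some j'')).card < N := by
      rw [← hcard]
      exact Finset.card_lt_card ⟨hsub, fun hsub' => min'_not_mem_ab J j'' (hsub' hmem)⟩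
    obtain ⟨k₂, hk₂1, hk₂2, hk₂3, hk₂4⟩ :=
      ih _ hlt j'' hj''J rfl ⟨0, hm _⟩ k₁ hck1
    refine ⟨k₂, lt_trans hk1 hk₂1, ?_, hk₂3, ?_⟩
    · intro s hs1 hs2
      by_cases hsk : s < k₁
      · obtain ⟨l', hl'⟩ := hint s hs1 hsk
        rw [hl']
        simp
      · exact hk₂2 s (by omega) hs2
    · have hsplit : SegWeight (sw m hm P J rew) i k₁ +
          SegWeight (sw m hm P J rew) k₁ k₂ = SegWeight (sw m hm P J rew) i k₂ :=
        Finset.sum_Ico_consecutive _ (le_of_lt hk1) (le_of_lt hk₂1)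
      have hins : Ab J (some j) = insert j'' (Ab J (some j'')) := ab_insert J (some j) hne
      have hexit : exitW J rew j = rew j'' := dif_pos hne
      rw [← hsplit, hk4, hk₂4, hexit, hins,
        Finset.sum_insert (min'_not_mem_ab J j'')]
  · have hempty : Ab J (some j) = ∅ := Finset.not_nonempty_iff_eq_empty.mp hne
    refine ⟨k₁, hk1, ?_, ?_, ?_⟩
    · intro s hs1 hs2
      obtain ⟨l', hl'⟩ := hint s hs1 hs2
      rw [hl']
      simp
    · rw [hk3, nxt_neg m hm J hne]
    · rw [hk4, hempty]
      simp [exitW, hne]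

lemma cyc (hP : ∀ j ∈ J, ∀ l N, ∃ t, N ≤ t ∧ P j l t) (i : ℕ)
    (hi : cseq m hm P J i = none) :
    ∃ k, i < k ∧ (∀ s, i < s → s < k → cseq m hm P J s ≠ none) ∧ cseq m hm P J k = none ∧
      SegWeight (sw m hm P J rew) i k = ∑ j ∈ J, rew j := by
  have hstep1 : cseq m hm P J (i + 1) = nxt m hm J none := by
    rw [cseq_succ, hi]
    rfl
  by_cases hne : (Ab J none).Nonempty
  · have hmem := Finset.min'_mem _ hne
    set j₀ := (Ab J none).min' hne with hj₀
    have hj₀J : j₀ ∈ J := hmem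
    have hc1 : cseq m hm P J (i + 1) = some ⟨j₀, ⟨0, hm _⟩⟩ := by
      rw [hstep1, nxt_pos m hm J hne]
    obtain ⟨k, hk1, hk2, hk3, hk4⟩ :=
      tour m hm P J rew hP _ j₀ hj₀J rfl ⟨0, hm _⟩ (i + 1) hc1
    refine ⟨k, by omega, ?_, hk3, ?_⟩
    · intro s h1 h2
      exact hk2 s (by omega) h2
    · have hsplit : SegWeight (sw m hm P J rew) i (i + 1) +
          SegWeight (sw m hm P J rew) (i + 1) k = SegWeight (sw m hm P J rew) i k :=
        Finset.sum_Ico_consecutive _ (Nat.le_succ i) (le_of_lt hk1)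
      have h1 : SegWeight (sw m hm P J rew) i (i + 1) = sw m hm P J rew i := by
        unfold SegWeight
        rw [Finset.sum_Ico_succ_top le_rfl]
        simp
      have h2 : sw m hm P J rew i = rew j₀ := by
        unfold sw
        rw [hi, hc1]
        simp [CompWeight]
      have hins : (J : Finset (Fin n)) = insert j₀ (Ab J (some j₀)) := ab_insert J none hne
      rw [← hsplit, h1, h2, hk4]
      conv_rhs => rw [hins]
      rw [Finset.sum_insert (min'_not_mem_ab J j₀)]
  · have hJ : (J : Finset (Fin n)) = ∅ := Finset.not_nonempty_iff_eq_empty.mp hne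
    have hc1 : cseq m hm P J (i + 1) = none := by
      rw [hstep1, nxt_neg m hm J hne]
    refine ⟨i + 1, Nat.lt_succ_self i, by omega, hc1, ?_⟩
    have h1 : SegWeight (sw m hm P J rew) i (i + 1) = sw m hm P J rew i := by
      unfold SegWeight
      rw [Finset.sum_Ico_succ_top le_rfl]
      simp
    have h2 : sw m hm P J rew i = 0 := by
      unfold sw
      rw [hi, hc1]
      rfl
    rw [h1, h2, hJ]
    simp

lemma inf_none (hP : ∀ j ∈ J, ∀ l N, ∃ t, N ≤ t ∧ P j l t) :
    ∀ N, ∃ i, N ≤ i ∧ cseq m hm P J i = none := by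
  intro N
  induction N with
  | zero => exact ⟨0, le_rfl, rfl⟩
  | succ N ih =>
    obtain ⟨i, hi, hnone⟩ := ih
    obtain ⟨k, hk1, _, hk3, _⟩ := cyc m hm P J (fun _ => 0) hP i hnone
    exact ⟨k, by omega, hk3⟩

end

end S9

/-- for every trace `τ` of `T` there is an accepting run `ρ_P` of
`P = T ⊗ B` projecting onto `τ` with `C(ρ_P) = Rew(τ)`. -/
theorem statement9 {S A : Type*} [Finite S] [Finite A] {n : ℕ} {Qs : Fin n → Type*}
    [∀ j, Finite (Qs j)] {m : Fin n → ℕ} (hm : ∀ j, 0 < m j)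
    (G : ∀ j, GBA (Qs j) A (m j)) (hnb : ∀ j, (G j).NonBlocking)
    (rew : Fin n → ℕ) (hrew : ∀ i j : Fin n, i ≤ j → rew j ≤ rew i)
    (T : LTS S A) (τ : ℕ → S) (htr : T.IsTrace τ) :
    ∃ ρ, IsProdRun T (BAut G rew) ρ ∧ IsProdAccepting T (BAut G rew) ρ ∧
      (∀ i, (ρ i).1 = τ i) ∧
      RunRewardIs (ProdAcc T (BAut G rew)) ρ (ProdStepW T (BWeight rew) ρ)
        (TraceRew T G rew τ) := by
  classical
  -- runs of the individual GBAs over the word of τ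
  have hruns : ∀ j : Fin n, ∃ ρj : ℕ → Qs j, ρj 0 = (G j).init ∧
      (∀ i, (ρj i, T.word τ i, ρj (i + 1)) ∈ (G j).trans) ∧
      (T.word τ ∈ (G j).Lang → (G j).IsAccepting ρj) := by
    intro j
    by_cases h : T.word τ ∈ (G j).Lang
    · obtain ⟨ρj, ⟨h0, htr'⟩, hacc⟩ := h
      exact ⟨ρj, h0, htr', fun _ => hacc⟩
    · choose g hg using hnb j
      exact ⟨fun i => Nat.rec (G j).init (fun i q => g q (T.word τ i)) i, rfl,
        fun i => hg _ _, fun hc => absurd hc h⟩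
  choose ρs hρ0 hρtr hρacc using hruns
  set P : (j : Fin n) → Fin (m j) → ℕ → Prop :=
    fun j l i => ρs j i ∈ (G j).acc l with hPdef
  set J : Finset (Fin n) :=
    Finset.univ.filter (fun j => T.word τ ∈ (G j).Lang) with hJdef
  have hmemJ : ∀ j : Fin n, j ∈ J ↔ T.word τ ∈ (G j).Lang := by
    intro j
    simp [hJdef]
  have hP : ∀ j ∈ J, ∀ (l : Fin (m j)) (N : ℕ), ∃ t, N ≤ t ∧ P j l t := by
    intro j hj l N
    exact hρacc j ((hmemJ j).mp hj) l N
  set c : ℕ → BComp n m := S9.cseq m hm P J with hcdef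
  set ρ : ℕ → S × ((∀ j, Qs j) × BComp n m) :=
    fun i => (τ i, fun j => ρs j i, c i) with hρdef
  -- the component steps are legal
  have hcomp : ∀ i, CompStep G (fun j => ρs j i) (c i) (c (i + 1)) := by
    intro i
    have hs : c (i + 1) = S9.step m hm P J i (c i) := rfl
    rcases hci : c i with _ | ⟨j, l⟩ <;> rw [hci] at hs
    · rw [hs]
      show CompStep G _ none (S9.nxt m hm J none)
      unfold S9.nxt
      split_ifs with h
      · exact rfl
      · trivial
    · rw [hs]
      simp only [S9.step]
      by_cases hPi : P j l i
      · rw [if_pos hPi]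
        split_ifs with h2
        · exact Or.inr (Or.inl ⟨rfl, rfl, hPi⟩)
        · have hl : (l : ℕ) + 1 = m j := by
            have := l.isLt
            omega
          unfold S9.nxt
          split_ifs with h3
          · have hmem := Finset.min'_mem _ h3
            have hlt : j < (S9.Ab J (some j)).min' h3 := (Finset.mem_filter.mp hmem).2
            exact Or.inr (Or.inr ⟨hlt, hl, rfl, hPi⟩)
          · exact ⟨hl, hPi⟩
      · rw [if_neg hPi]
        exact Or.inl ⟨rfl, rfl, hPi⟩
  have hrun : IsProdRun T (BAut G rew) ρ := by
    constructor
    · show (τ 0, fun j => ρs j 0, c 0) = (T.init, fun j => (G j).init, none)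
      rw [htr.1]
      exact congrArg _ (congrArg₂ _ (funext hρ0) rfl)
    · intro i
      exact ⟨htr.2 i, fun j => hρtr j i, hcomp i⟩
  -- membership in the accepting set is: component is none
  have hmemF : ∀ i, ρ i ∈ ProdAcc T (BAut G rew) ↔ c i = none := fun i => Iff.rfl
  have hacc' : IsProdAccepting T (BAut G rew) ρ := by
    intro N
    obtain ⟨i, hi, hnone⟩ := S9.inf_none m hm P J hP N
    exact ⟨i, hi, (hmemF i).mpr hnone⟩
  -- total reward
  have hRW : TraceRew T G rew τ = ∑ j ∈ J, rew j := by
    rw [hJdef, TraceRew, Finset.sum_filter]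
  have hsw : ProdStepW T (BWeight rew) ρ = S9.sw m hm P J rew := rfl
  have hfrag : ∀ i k, IsFragment (ProdAcc T (BAut G rew)) ρ i k →
      SegWeight (S9.sw m hm P J rew) i k = ∑ j ∈ J, rew j := by
    rintro i k ⟨hik, hiF, hkF, hint⟩
    obtain ⟨k0, h1, h2, h3, h4⟩ := S9.cyc m hm P J rew hP i ((hmemF i).mp hiF)
    have hkk : k = k0 := by
      by_contra hne
      rcases lt_or_gt_of_ne hne with h | h
      · exact h2 k hik h ((hmemF k).mp hkF)
      · exact hint k0 h1 h ((hmemF k0).mpr h3)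
    rw [hkk]
    exact h4
  refine ⟨ρ, hrun, hacc', fun i => rfl, ?_⟩
  rw [hRW, hsw]
  constructor
  · intro N
    obtain ⟨i, hi, hnone⟩ := S9.inf_none m hm P J hP N
    obtain ⟨k0, h1, h2, h3, h4⟩ := S9.cyc m hm P J rew hP i hnone
    refine ⟨i, k0, hi, ⟨h1, (hmemF i).mpr hnone, (hmemF k0).mpr h3, ?_⟩, h4⟩
    intro s hs1 hs2 hsF
    exact h2 s hs1 hs2 ((hmemF s).mp hsF)
  · intro v hv
    refine ⟨0, fun i k _ hf => ?_⟩
    rw [hfrag i k hf]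
    omega
end

section
/- Let T be a labeled transition system, let B be the weighted Büchi automaton constructed from non-blocking generalized Büchi automata G_1, …, G_n with rewards rew_1 ≥ … ≥ rew_n, and let P = T ⊗ B. Let p, p' ∈ F_P and suppose there is a finite path in P from p to p' (a sequence p = p_0, p_1, …, p_k = p' with (p_t, p_{t+1}) ∈ δ_P for all t). Then there is a finite path in P from p to p' all of whose states lie in F_P, whose total weight (sum of W_P over its transitions) equals 0, and whose states are pairwise distinct except possibly p = p'. -/
/-- Auxiliary: any finite path inside a set `F` can be shortened to one with pairwise
distinct states (except possibly the endpoints). -/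
lemma exists_simple_path {X : Type*} (E : Set (X × X)) (F : Set X) :
    ∀ k : ℕ, ∀ f : ℕ → X, IsFinPath E f k → (∀ t ≤ k, f t ∈ F) →
    ∃ k' f', f' 0 = f 0 ∧ f' k' = f k ∧ IsFinPath E f' k' ∧ (∀ t ≤ k', f' t ∈ F) ∧
      (∀ t t', t < t' → t' ≤ k' → f' t = f' t' → t = 0 ∧ t' = k') := by
  intro k
  induction k using Nat.strong_induction_on with
  | _ k ih =>
    intro f hpath hF
    by_cases hdup : ∃ t t', t < t' ∧ t' ≤ k ∧ f t = f t' ∧ ¬(t = 0 ∧ t' = k)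
    · obtain ⟨t, t', htt, ht'k, heq, hne⟩ := hdup
      set d := t' - t with hd
      have hdpos : 0 < d := by omega
      have hlt : k - d < k := by omega
      set g : ℕ → X := fun s => if s ≤ t then f s else f (s + d) with hg
      have hgpath : IsFinPath E g (k - d) := by
        intro s hs
        rcases lt_trichotomy s t with h | h | h
        · have : s ≤ t := le_of_lt h
          have h1 : s + 1 ≤ t := h
          simp only [hg, if_pos this, if_pos h1]
          exact hpath s (by omega)
        · subst h
          have h2 : ¬ (s + 1 ≤ s) := by omega
          simp only [hg, if_pos (le_refl s), if_neg h2]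
          have : s + 1 + d = t' + 1 := by omega
          rw [this, heq]
          exact hpath t' (by omega)
        · have h1 : ¬ (s ≤ t) := by omega
          have h2 : ¬ (s + 1 ≤ t) := by omega
          simp only [hg, if_neg h1, if_neg h2]
          have : s + 1 + d = s + d + 1 := by omega
          rw [this]
          exact hpath (s + d) (by omega)
      have hgF : ∀ s ≤ k - d, g s ∈ F := by
        intro s hs
        by_cases h : s ≤ t
        · simp only [hg, if_pos h]; exact hF s (by omega)
        · simp only [hg, if_neg h]; exact hF (s + d) (by omega)
      obtain ⟨k', f', h0', hk', hpath', hF', hdist'⟩ := ih (k - d) hlt g hgpath hgF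
      refine ⟨k', f', ?_, ?_, hpath', hF', hdist'⟩
      · rw [h0']; simp [hg]
      · rw [hk']
        by_cases h : k - d ≤ t
        · have hkd : k - d = t := by omega
          have ht'2 : t' = k := by omega
          have hgval : g (k - d) = f t := by simp [hg, hkd]
          rw [hgval, heq, ht'2]
        · simp only [hg, if_neg h]
          congr 1; omega
    · refine ⟨k, f, rfl, rfl, hpath, hF, ?_⟩
      intro t t' h1 h2 h3
      by_contra hc
      exact hdup ⟨t, t', h1, h2, h3, hc⟩

/-- if `p, p' ∈ F_P` and `p'` is reachable from `p` in `P = T ⊗ B`, then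
there is a finite path from `p` to `p'` lying entirely in `F_P`, of total weight `0`,
whose states are pairwise distinct except possibly `p = p'`. -/
theorem statement13 {S A : Type*} [Finite S] [Finite A] {n : ℕ} {Qs : Fin n → Type*}
    [∀ j, Finite (Qs j)] {m : Fin n → ℕ} (hm : ∀ j, 0 < m j)
    (G : ∀ j, GBA (Qs j) A (m j)) (hnb : ∀ j, (G j).NonBlocking)
    (rew : Fin n → ℕ) (hrew : ∀ i j : Fin n, i ≤ j → rew j ≤ rew i)
    (T : LTS S A) (p p' : S × ((∀ j, Qs j) × BComp n m))
    (hp : p ∈ ProdAcc T (BAut G rew)) (hp' : p' ∈ ProdAcc T (BAut G rew))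
    (k : ℕ) (f : ℕ → S × ((∀ j, Qs j) × BComp n m))
    (h0 : f 0 = p) (hk : f k = p')
    (hpath : IsFinPath (ProdTrans T (BAut G rew)) f k) :
    ∃ (k' : ℕ) (f' : ℕ → S × ((∀ j, Qs j) × BComp n m)),
      f' 0 = p ∧ f' k' = p' ∧ IsFinPath (ProdTrans T (BAut G rew)) f' k' ∧
      (∀ t ≤ k', f' t ∈ ProdAcc T (BAut G rew)) ∧
      (∑ t ∈ Finset.range k', ProdStepW T (BWeight rew) f' t) = 0 ∧
      (∀ t t', t < t' → t' ≤ k' → f' t = f' t' → t = 0 ∧ t' = k') := by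
  -- project the path to component `none`
  have hpnone : p.2.2 = none := hp
  have hp'none : p'.2.2 = none := hp'
  set g : ℕ → S × ((∀ j, Qs j) × BComp n m) :=
    fun t => ((f t).1, ((f t).2.1, (none : BComp n m))) with hg
  have hgpath : IsFinPath (ProdTrans T (BAut G rew)) g k := by
    intro t ht
    obtain ⟨h1, h2⟩ := hpath t ht
    exact ⟨h1, h2.1, trivial⟩
  have hgF : ∀ t ≤ k, g t ∈ ProdAcc T (BAut G rew) := fun t _ => rfl
  obtain ⟨k', f', h0', hk', hpath', hF', hdist'⟩ :=
    exists_simple_path (ProdTrans T (BAut G rew)) (ProdAcc T (BAut G rew)) k g hgpath hgF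
  have hg0 : g 0 = p := by
    simp only [hg, h0]
    exact Prod.ext rfl (Prod.ext rfl hpnone.symm)
  have hgk : g k = p' := by
    simp only [hg, hk]
    exact Prod.ext rfl (Prod.ext rfl hp'none.symm)
  refine ⟨k', f', h0'.trans hg0, hk'.trans hgk, hpath', hF', ?_, hdist'⟩
  apply Finset.sum_eq_zero
  intro t ht
  have ht' : t + 1 ≤ k' := by simpa using Finset.mem_range.mp ht
  have hnone : (f' (t + 1)).2.2 = none := hF' (t + 1) ht'
  unfold ProdStepW BWeight
  rw [hnone]
  rfl
end

section
/- Let P = T ⊗ B be the weighted product of a labeled transition system T and a weighted Büchi automaton B, with accepting set F_P and weights W_P. For a finite cycle c = p_0 p_1 … p_k with p_k = p_0 ∈ F_P and (p_t, p_{t+1}) ∈ δ_P for all t, define C(c) as the maximum, over the fragments of c (maximal segments of c whose endpoints lie in F_P and whose interior states do not), of the sum of W_P over the fragment's transitions. Suppose p_f, p_f' ∈ F_P, p_f' is reachable from p_f, a state p is reachable from p_f' (reachable meaning there is a finite δ_P-path), and there exists a cycle c starting and ending at p_f that contains p. Then there exists a cycle c' starting and ending at p_f' with C(c') ≥ C(c).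 -/
/-- The reward `C(c)` of a finite cycle `f 0 … f k` (with `f k = f 0 ∈ F`): the maximum,
over fragments of the cycle, of the fragment weight. -/
noncomputable def CycleReward {X : Type*} (F : Set X) (stepW : ℕ → ℕ) (f : ℕ → X)
    (k : ℕ) : ℕ :=
  sSup {v | ∃ i k', IsCycFrag F f k i k' ∧ SegWeight stepW i k' = v}

/-- if `p_f, p_f' ∈ F_P`, `p_f'` is reachable from `p_f`, `p` is reachable
from `p_f'`, and some cycle `c` at `p_f` contains `p`, then there is a cycle `c'` at
`p_f'` with `C(c') ≥ C(c)`. -/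
theorem statement15 {S Q A : Type*} [Finite S] [Finite Q] [Finite A]
    (T : LTS S A) (M : BA Q A) (W : Q → A → Q → ℕ)
    (pf pf' p : S × Q) (hpf : pf ∈ ProdAcc T M) (hpf' : pf' ∈ ProdAcc T M)
    (hreach1 : ∃ k g, g 0 = pf ∧ g k = pf' ∧ IsFinPath (ProdTrans T M) g k)
    (hreach2 : ∃ k g, g 0 = pf' ∧ g k = p ∧ IsFinPath (ProdTrans T M) g k)
    (kc : ℕ) (hkc : 0 < kc) (c : ℕ → S × Q) (hc0 : c 0 = pf) (hck : c kc = pf)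
    (hcpath : IsFinPath (ProdTrans T M) c kc) (hmem : ∃ t ≤ kc, c t = p) :
    ∃ (kc' : ℕ) (c' : ℕ → S × Q), 0 < kc' ∧ c' 0 = pf' ∧ c' kc' = pf' ∧
      IsFinPath (ProdTrans T M) c' kc' ∧
      CycleReward (ProdAcc T M) (ProdStepW T W c) c kc ≤
        CycleReward (ProdAcc T M) (ProdStepW T W c') c' kc' := by
  classical
  obtain ⟨k1, g1, hg10, hg1k, hg1p⟩ := hreach1
  obtain ⟨k2, g2, hg20, hg2k, hg2p⟩ := hreach2
  obtain ⟨t, ht, hct⟩ := hmem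
  set off : ℕ := k2 + (kc - t) with hoffdef
  set kcf : ℕ := off + kc + k1 with hkcfdef
  set c' : ℕ → S × Q := fun j =>
    if j ≤ k2 then g2 j
    else if j ≤ off then c (t + (j - k2))
    else if j ≤ off + kc then c (j - off)
    else g1 (j - (off + kc)) with hc'def
  have hshift : ∀ j, j ≤ kc → c' (off + j) = c j := by
    intro j hj
    simp only [hc'def]
    by_cases h1 : off + j ≤ k2
    · have hj0 : j = 0 := by omega
      have heq : off + j = k2 := by omega
      have hteq : t = kc := by omega
      rw [if_pos h1, heq, hg2k, ← hct, hteq, hck, ← hc0, hj0]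
    · rw [if_neg h1]
      by_cases h2 : off + j ≤ off
      · have hj0 : j = 0 := by omega
        rw [if_pos h2]
        have he : t + (off + j - k2) = kc := by omega
        rw [he, hck, ← hc0, hj0]
      · rw [if_neg h2, if_pos (by omega)]
        congr 1
        omega
  have hstep : IsFinPath (ProdTrans T M) c' kcf := by
    intro u hu
    by_cases r1 : u < k2
    · have e1 : c' u = g2 u := by simp only [hc'def]; rw [if_pos (by omega)]
      have e2 : c' (u + 1) = g2 (u + 1) := by simp only [hc'def]; rw [if_pos (by omega)]
      rw [e1, e2]; exact hg2p u r1
    · by_cases r2 : u < off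
      · have hj : t + (u - k2) < kc := by omega
        have e2 : c' (u + 1) = c (t + (u - k2) + 1) := by
          simp only [hc'def]
          rw [if_neg (by omega), if_pos (by omega)]
          congr 1; omega
        have e1 : c' u = c (t + (u - k2)) := by
          simp only [hc'def]
          by_cases h : u ≤ k2
          · have hu2 : u = k2 := by omega
            rw [if_pos h, hu2, hg2k]
            have he : t + (k2 - k2) = t := by omega
            rw [he]; exact hct.symm
          · rw [if_neg h, if_pos (by omega)]
        rw [e1, e2]; exact hcpath _ hj
      · by_cases r3 : u < off + kc
        · have e1 := hshift (u - off) (by omega)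
          have e2 := hshift (u - off + 1) (by omega)
          rw [show off + (u - off) = u from by omega] at e1
          rw [show off + (u - off + 1) = u + 1 from by omega] at e2
          rw [e1, e2]
          exact hcpath _ (by omega)
        · have hj : u - (off + kc) < k1 := by omega
          have e2 : c' (u + 1) = g1 (u - (off + kc) + 1) := by
            simp only [hc'def]
            rw [if_neg (by omega), if_neg (by omega), if_neg (by omega)]
            congr 1; omega
          have e1 : c' u = g1 (u - (off + kc)) := by
            by_cases h : u = off + kc
            · have hs := hshift kc le_rfl
              rw [h, show off + kc - (off + kc) = 0 from by omega, hg10, ← hck]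
              exact hs
            · simp only [hc'def]
              rw [if_neg (by omega), if_neg (by omega), if_neg (by omega)]
          rw [e1, e2]; exact hg1p _ hj
  have h0 : c' 0 = pf' := by
    simp only [hc'def]; rw [if_pos (Nat.zero_le k2)]; exact hg20
  have hend : c' kcf = pf' := by
    by_cases h : k1 = 0
    · have hs := hshift kc le_rfl
      have hk : kcf = off + kc := by omega
      rw [hk, hs, hck, ← hg10, show (0 : ℕ) = k1 from h.symm]
      exact hg1k
    · simp only [hc'def]
      rw [if_neg (by omega), if_neg (by omega), if_neg (by omega),
        show kcf - (off + kc) = k1 from by omega]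
      exact hg1k
  refine ⟨kcf, c', by omega, h0, hend, hstep, ?_⟩
  unfold CycleReward
  have hsub : {v | ∃ i k', IsCycFrag (ProdAcc T M) c kc i k' ∧
        SegWeight (ProdStepW T W c) i k' = v} ⊆
      {v | ∃ i k', IsCycFrag (ProdAcc T M) c' kcf i k' ∧
        SegWeight (ProdStepW T W c') i k' = v} := by
    rintro v ⟨i, k', ⟨hik, hk'kc, hiF, hk'F, hint⟩, hw⟩
    refine ⟨off + i, off + k', ⟨by omega, by omega, ?_, ?_, ?_⟩, ?_⟩
    · rw [hshift i (by omega)]; exact hiF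
    · rw [hshift k' (by omega)]; exact hk'F
    · intro s hs1 hs2
      rw [show s = off + (s - off) from by omega, hshift (s - off) (by omega)]
      exact hint _ (by omega) (by omega)
    · rw [← hw]
      unfold SegWeight
      rw [Finset.sum_Ico_eq_sum_range, Finset.sum_Ico_eq_sum_range,
        show off + k' - (off + i) = k' - i from by omega]
      apply Finset.sum_congr rfl
      intro j hj
      simp only [Finset.mem_range] at hj
      unfold ProdStepW
      rw [show off + i + j = off + (i + j) from by omega, hshift (i + j) (by omega),
        show off + (i + j) + 1 = off + (i + j + 1) from by omega,
        hshift (i + j + 1) (by omega)]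
  have hbdd : BddAbove {v | ∃ i k', IsCycFrag (ProdAcc T M) c' kcf i k' ∧
      SegWeight (ProdStepW T W c') i k' = v} := by
    refine ⟨∑ j ∈ Finset.range kcf, ProdStepW T W c' j, ?_⟩
    rintro v ⟨i, k', ⟨hik, hk'kc, _, _, _⟩, hw⟩
    rw [← hw]
    unfold SegWeight
    rw [show Finset.range kcf = Finset.Ico 0 kcf from by rw [Finset.range_eq_Ico]]
    apply Finset.sum_le_sum_of_subset
    intro x hx
    simp only [Finset.mem_Ico] at *
    omega
  by_cases hA : {v | ∃ i k', IsCycFrag (ProdAcc T M) c kc i k' ∧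
      SegWeight (ProdStepW T W c) i k' = v}.Nonempty
  · exact csSup_le_csSup hbdd hA hsub
  · rw [Set.not_nonempty_iff_eq_empty] at hA
    rw [hA, csSup_empty]
    exact bot_le
end
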